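/- arXiv:1701.02119 — 3 statements merged into one kernel-verified Lean document; each statement's English description precedes it below -/
import Mathlib

section
/- Let X be a finite set with |X| ≥ 2, let r > 0, and let α, β ∈ ℝ^X_{K+} be probability vectors with x_max(α) = x_max(β). If the quadrants Q'(α,r) and Q'(β,r) have a non-empty intersection, then d(α,β) ≤ r. -/
open scoped BigOperators

/-- The scalar "distance" `d(α,ζ) = min (d₁(α,ζ), d₂(α,ζ))` where `d₁(α,ζ) = |ζ - α|` and
`d₂(α,ζ) = (ζ-α)²/min(α,ζ)` if `α,ζ > 0` and `∞` otherwise (so the `min` collapses to `d₁`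
in that case). -/
noncomputable def dSc (a z : ℝ) : ℝ :=
  if 0 < a ∧ 0 < z then min |z - a| ((z - a) ^ 2 / min a z) else |z - a|

/-- The vector "distance" `d(α,β) = max_{x ∈ X} d(α_x, β_x)`. -/
noncomputable def dVec {X : Type} [Fintype X] [Nonempty X] (a b : X → ℝ) : ℝ :=
  Finset.univ.sup' Finset.univ_nonempty fun x => dSc (a x) (b x)

/-- `ω↓(α,r) = max (√(r²/4 + αr) - r/2, r)`. -/
noncomputable def omegaDown (a r : ℝ) : ℝ :=
  max (Real.sqrt (r ^ 2 / 4 + a * r) - r / 2) r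

/-- `ω'(α,r) = ω↓(α,r)/(|X| - 1)`, where `k = |X|`. -/
noncomputable def omegaPrime (k : ℕ) (a r : ℝ) : ℝ :=
  omegaDown a r / ((k : ℝ) - 1)

/-!
Off the common maximiser `x₀`, both `α x` and `β x` lie below `ζ x` within `ω'`, so
`|α x - β x| ≤ ω' ≤ ω↓`. At `x₀` the two vectors have the same total mass, so
`β x₀ - α x₀ = ∑_{y ≠ x₀} (α y - β y)`, a sum of `|X| - 1` terms each at most
`ω'(β y) ≤ ω'(β x₀)`; hence the gap is at most `ω↓(β x₀)`, and symmetrically at most `ω↓(α x₀)`.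
Finally a gap `t = b - a ≥ 0` with `t ≤ ω↓(b, r)` has `t ≤ r` or `t² / a ≤ r`, since
`t ≤ √(r²/4 + br) - r/2` means `t² + tr ≤ br`, i.e. `t² ≤ ar`.
-/

open Finset

lemma dSc_comm (a b : ℝ) : dSc a b = dSc b a := by
  unfold dSc
  by_cases h : 0 < a ∧ 0 < b
  · rw [if_pos h, if_pos h.symm, abs_sub_comm, min_comm a b, ← neg_sub, neg_sq]
  · rw [if_neg h, if_neg (fun h' => h h'.symm), abs_sub_comm]

lemma dSc_le_abs_sub (a b : ℝ) : dSc a b ≤ |b - a| := by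
  unfold dSc
  split_ifs
  exacts [min_le_left _ _, le_rfl]

lemma omegaDown_mono {a b r : ℝ} (hr : 0 ≤ r) (h : a ≤ b) : omegaDown a r ≤ omegaDown b r := by
  unfold omegaDown
  gcongr

lemma omegaPrime_mono {k : ℕ} (hk : 2 ≤ k) {a b r : ℝ} (hr : 0 ≤ r) (h : a ≤ b) :
    omegaPrime k a r ≤ omegaPrime k b r := by
  have : (0 : ℝ) < k - 1 := by linarith [show (2 : ℝ) ≤ k by exact_mod_cast hk]
  exact div_le_div_of_nonneg_right (omegaDown_mono hr h) this.le

lemma omegaPrime_le_omegaDown {k : ℕ} (hk : 2 ≤ k) {a r : ℝ} (hr : 0 ≤ r) :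
    omegaPrime k a r ≤ omegaDown a r := by
  have : (1 : ℝ) ≤ k - 1 := by linarith [show (2 : ℝ) ≤ k by exact_mod_cast hk]
  exact div_le_self (hr.trans (le_max_right _ _)) this

lemma sub_one_mul_omegaPrime {k : ℕ} (hk : 2 ≤ k) (a r : ℝ) :
    ((k : ℝ) - 1) * omegaPrime k a r = omegaDown a r := by
  have : (k : ℝ) - 1 ≠ 0 := by linarith [show (2 : ℝ) ≤ k by exact_mod_cast hk]
  exact mul_div_cancel₀ _ this

lemma dSc_le_of_sub_le_omegaDown {a b r : ℝ} (hr : 0 < r) (hab : a ≤ b)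
    (h : b - a ≤ omegaDown b r) : dSc a b ≤ r := by
  set t := b - a with ht
  rcases le_or_gt t r with htr | htr
  · calc dSc a b ≤ |b - a| := dSc_le_abs_sub a b
      _ = t := abs_of_nonneg (sub_nonneg.mpr hab)
      _ ≤ r := htr
  have ht_sqrt : t + r / 2 ≤ Real.sqrt (r ^ 2 / 4 + b * r) := by
    rcases le_max_iff.mp h with h | h <;> linarith
  have ht_sq : t ^ 2 ≤ a * r := by
    have := (Real.le_sqrt' (by linarith)).mp ht_sqrt
    nlinarith
  have ha : 0 < a := by nlinarith
  unfold dSc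
  rw [if_pos ⟨ha, ha.trans_le hab⟩, min_eq_left hab]
  calc min |b - a| ((b - a) ^ 2 / a) ≤ t ^ 2 / a := min_le_right _ _
    _ ≤ r := by rwa [div_le_iff₀ ha, mul_comm]

lemma dSc_le_of_abs_sub_le_omegaDown_max {a b r : ℝ} (hr : 0 < r)
    (h : |a - b| ≤ omegaDown (max a b) r) : dSc a b ≤ r := by
  rcases le_total a b with hab | hba
  · rw [max_eq_right hab, abs_sub_comm] at h
    exact dSc_le_of_sub_le_omegaDown hr hab ((le_abs_self _).trans h)
  · rw [max_eq_left hba] at h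
    rw [dSc_comm]
    exact dSc_le_of_sub_le_omegaDown hr hba ((le_abs_self _).trans h)

lemma sub_le_card_sub_one_mul_of_sum_eq {X : Type*} [Fintype X] {f g : X → ℝ}
    (hsum : ∑ y, f y = ∑ y, g y) (i : X) {c : ℝ} (h : ∀ y, y ≠ i → f y - g y ≤ c) :
    g i - f i ≤ ((Fintype.card X : ℝ) - 1) * c := by
  classical
  calc g i - f i = ∑ y ∈ univ.erase i, (f y - g y) := by
        rw [sum_sub_distrib]
        linarith [add_sum_erase univ f (mem_univ i), add_sum_erase univ g (mem_univ i)]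
    _ ≤ (univ.erase i).card • c := sum_le_card_nsmul _ _ _ fun y hy => h y (ne_of_mem_erase hy)
    _ = ((Fintype.card X : ℝ) - 1) * c := by
        rw [card_erase_of_mem (mem_univ i), card_univ, nsmul_eq_mul,
          Nat.cast_sub (Fintype.card_pos_iff.mpr ⟨i⟩), Nat.cast_one]

lemma sub_le_omegaDown_of_sum_eq {X : Type*} [Fintype X] (hX : 2 ≤ Fintype.card X) {r : ℝ}
    (hr : 0 ≤ r) {f g : X → ℝ} (hsum : ∑ y, f y = ∑ y, g y) {i : X} (hg : ∀ y, g y ≤ g i)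
    (h : ∀ y, y ≠ i → f y - g y ≤ omegaPrime (Fintype.card X) (g y) r) :
    g i - f i ≤ omegaDown (g i) r :=
  calc g i - f i ≤ ((Fintype.card X : ℝ) - 1) * omegaPrime (Fintype.card X) (g i) r :=
        sub_le_card_sub_one_mul_of_sum_eq hsum i fun y hy =>
          (h y hy).trans (omegaPrime_mono hX hr (hg y))
    _ = omegaDown (g i) r := sub_one_mul_omegaPrime hX _ _

theorem quadrants_intersect_imp_d_le_general {X : Type} [Fintype X] [Nonempty X]
    (hX : 2 ≤ Fintype.card X) (r : ℝ) (hr : 0 < r)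
    (α β : X → ℝ)
    (hα1 : ∑ x, α x = 1)
    (hβ1 : ∑ x, β x = 1)
    (xmax : X) (hαmax : ∀ x, α x ≤ α xmax) (hβmax : ∀ x, β x ≤ β xmax)
    (ζ : X → ℝ)
    (hζα : ∀ x, x ≠ xmax →
      0 ≤ ζ x - α x ∧ ζ x - α x ≤ omegaPrime (Fintype.card X) (α x) r)
    (hζβ : ∀ x, x ≠ xmax →
      0 ≤ ζ x - β x ∧ ζ x - β x ≤ omegaPrime (Fintype.card X) (β x) r) :
    dVec α β ≤ r := by
  have hαβ : ∀ x, x ≠ xmax → α x - β x ≤ omegaPrime (Fintype.card X) (β x) r := fun x hx => by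
    linarith [(hζα x hx).1, (hζβ x hx).2]
  have hβα : ∀ x, x ≠ xmax → β x - α x ≤ omegaPrime (Fintype.card X) (α x) r := fun x hx => by
    linarith [(hζβ x hx).1, (hζα x hx).2]
  have hleft (x : X) := omegaDown_mono (r := r) hr.le (le_max_left (α x) (β x))
  have hright (x : X) := omegaDown_mono (r := r) hr.le (le_max_right (α x) (β x))
  refine sup'_le _ _ fun x _ => dSc_le_of_abs_sub_le_omegaDown_max hr ?_
  rw [abs_sub_le_iff]
  by_cases hx : x = xmax
  · subst hx
    have hsum : ∑ y, α y = ∑ y, β y := hα1.trans hβ1.symm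
    exact ⟨(sub_le_omegaDown_of_sum_eq hX hr.le hsum.symm hαmax hβα).trans (hleft x),
      (sub_le_omegaDown_of_sum_eq hX hr.le hsum hβmax hαβ).trans (hright x)⟩
  · exact ⟨((hαβ x hx).trans (omegaPrime_le_omegaDown hX hr.le)).trans (hright x),
      ((hβα x hx).trans (omegaPrime_le_omegaDown hX hr.le)).trans (hleft x)⟩

/-- **Lemma 3:** if `α` and `β` are probability vectors with the same maximizing index `xmax`,
and the quadrants `Q'(α,r)` and `Q'(β,r)` have a common point `ζ`, then `d(α,β) ≤ r`. -/
theorem quadrants_intersect_imp_d_le {X : Type} [Fintype X] [Nonempty X]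
    (hX : 2 ≤ Fintype.card X) (r : ℝ) (hr : 0 < r)
    (α β : X → ℝ)
    (hα0 : ∀ x, 0 ≤ α x) (hα1 : ∑ x, α x = 1)
    (hβ0 : ∀ x, 0 ≤ β x) (hβ1 : ∑ x, β x = 1)
    (xmax : X) (hαmax : ∀ x, α x ≤ α xmax) (hβmax : ∀ x, β x ≤ β xmax)
    (ζ : X → ℝ)
    (hζα : ∀ x, x ≠ xmax →
      0 ≤ ζ x - α x ∧ ζ x - α x ≤ omegaPrime (Fintype.card X) (α x) r)
    (hζβ : ∀ x, x ≠ xmax →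
      0 ≤ ζ x - β x ∧ ζ x - β x ≤ omegaPrime (Fintype.card X) (β x) r) :
    dVec α β ≤ r :=
  quadrants_intersect_imp_d_le_general hX r hr α β hα1 hβ1 xmax hαmax hβmax ζ hζα hζβ
end

section
/- Let X be a finite set with |X| ≥ 2, fix x_max ∈ X with X' := X ∖ {x_max}, and let 0 < r ≤ 1. Then the weight of V' := ∪ { Q'(α,r) : α ∈ ℝ^X_{K+}, x_max(α) = x_max } satisfies ∫_{V'} φ(ζ') dζ' ≤ (π/2)^{(|X|−1)/2} / Γ(1 + (|X|−1)/2), where Γ is the Gamma function. -/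
open scoped BigOperators
open MeasureTheory

/-!
Every point of `V'` lies in `{ζ ≥ 0, ∑ ζ < 2}`: since `ω↓ ≤ 1`, each coordinate exceeds `α_x` by
at most `1/(|X|-1)`, and the `α_x` with `x ≠ x_max` add up to `1 - α_{x_max} < 1`. Substituting
`ζ_i = u_i²` turns `φ dζ'` into Lebesgue measure on the positive part of the ball `∑ u_i² < 2`,
which by sign symmetry is a `2^{-n}` share of the ball, of volume `(2π)^{n/2} / Γ(n/2 + 1)`.
-/

open scoped Pointwise ENNReal

theorem integral_le_of_lintegral_ofReal_le {α : Type*} [MeasurableSpace α] {μ : Measure α}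
    {f : α → ℝ} (hf0 : 0 ≤ᵐ[μ] f) (hf : AEStronglyMeasurable f μ) {c : ℝ} (hc : 0 ≤ c)
    (h : ∫⁻ x, ENNReal.ofReal (f x) ∂μ ≤ ENNReal.ofReal c) : ∫ x, f x ∂μ ≤ c := by
  rw [integral_eq_lintegral_of_nonneg_ae hf0 hf]
  exact ENNReal.toReal_le_of_le_ofReal hc h

section Pi

variable {ι : Type*} [Fintype ι]

theorem measurePreserving_pi_neg_ite [DecidableEq ι] (σ : Finset ι) :
    MeasurePreserving (fun (u : ι → ℝ) i => if i ∈ σ then -u i else u i) volume volume := by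
  have hf : ∀ i, MeasurePreserving (if i ∈ σ then Neg.neg else id : ℝ → ℝ) volume volume := by
    intro i
    split_ifs
    · exact Measure.measurePreserving_neg volume
    · exact MeasurePreserving.id volume
  have h : (fun (u : ι → ℝ) i => if i ∈ σ then -u i else u i)
      = fun u i => (if i ∈ σ then Neg.neg else id : ℝ → ℝ) (u i) := by
    ext u i; split_ifs <;> rfl
  exact h ▸ volume_preserving_pi hf

/-- The `2 ^ card ι` sign reflections carry the open positive orthant onto the other open
orthants, which cover everything but the coordinate hyperplanes. -/
theorem two_pow_card_mul_volume_inter_orthant {s : Set (ι → ℝ)} (hs : MeasurableSet s)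
    (habs : ∀ u, (fun i => |u i|) ∈ s ↔ u ∈ s) :
    2 ^ Fintype.card ι * volume (s ∩ Set.univ.pi fun _ => Set.Ioi 0) = volume s := by
  classical
  set P : Set (ι → ℝ) := Set.univ.pi fun _ => Set.Ioi 0
  set ρ : Finset ι → (ι → ℝ) → ι → ℝ := fun σ u i => if i ∈ σ then -u i else u i
  have hρ_abs : ∀ σ u, (fun i => |ρ σ u i|) = fun i => |u i| := by
    intro σ u; ext i; simp only [ρ]; split_ifs <;> simp
  have hmem : ∀ σ u, u ∈ ρ σ ⁻¹' (s ∩ P) ↔ u ∈ s ∧ ∀ i, 0 < ρ σ u i := by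
    intro σ u
    simp only [Set.mem_preimage, Set.mem_inter_iff, P, Set.mem_univ_pi, Set.mem_Ioi,
      ← habs (ρ σ u), hρ_abs, habs]
  have hmeasP : MeasurableSet P := MeasurableSet.univ_pi fun _ => measurableSet_Ioi
  have hdisj : Pairwise (Function.onFun Disjoint fun σ => ρ σ ⁻¹' (s ∩ P)) := by
    intro σ τ hστ
    refine Set.disjoint_left.2 fun u huσ huτ => hστ (Finset.ext fun i => ?_)
    have h1 := ((hmem σ u).1 huσ).2 i
    have h2 := ((hmem τ u).1 huτ).2 i
    simp only [ρ] at h1 h2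
    split_ifs at h1 h2 <;> simp_all <;> linarith
  have hunion : s ∩ {u | ∀ i, u i ≠ 0} = ⋃ σ, ρ σ ⁻¹' (s ∩ P) := by
    ext u
    simp only [Set.mem_iUnion, hmem]
    constructor
    · rintro ⟨hu, hne⟩
      refine ⟨Finset.univ.filter fun i => u i < 0, hu, fun i => ?_⟩
      have := hne i
      simp only [ρ, Finset.mem_filter, Finset.mem_univ, true_and]
      split_ifs <;> [linarith; exact lt_of_le_of_ne (not_lt.1 ‹_›) (Ne.symm this)]
    · rintro ⟨σ, hu, hpos⟩
      refine ⟨hu, fun i hi => ?_⟩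
      have := hpos i
      simp only [ρ, hi] at this
      split_ifs at this <;> simp at this
  have hnull : volume {u : ι → ℝ | ∀ i, u i ≠ 0}ᶜ = 0 := by
    have : {u : ι → ℝ | ∀ i, u i ≠ 0}ᶜ = ⋃ i, {u | u i = 0} := by
      ext; simp
    rw [this, measure_iUnion_null_iff]
    intro i
    rw [volume_pi]
    exact Measure.pi_hyperplane _ i 0
  calc 2 ^ Fintype.card ι * volume (s ∩ P)
      = ∑ σ : Finset ι, volume (ρ σ ⁻¹' (s ∩ P)) := by
        rw [Finset.sum_congr rfl fun σ _ => (measurePreserving_pi_neg_ite σ).measure_preimage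
          (hs.inter hmeasP).nullMeasurableSet]
        simp [Fintype.card_finset]
    _ = volume (s ∩ {u | ∀ i, u i ≠ 0}) := by
        rw [hunion, measure_iUnion hdisj fun σ =>
          (measurePreserving_pi_neg_ite σ).measurable (hs.inter hmeasP), tsum_fintype]
    _ = volume s := measure_inter_conull hnull


theorem volume_sum_sq_lt_sq {R : ℝ} (hR : 0 < R) :
    volume {u : ι → ℝ | ∑ i, u i ^ 2 < R ^ 2} =
      ENNReal.ofReal R ^ Fintype.card ι *
        ENNReal.ofReal (√Real.pi ^ Fintype.card ι / Real.Gamma (Fintype.card ι / 2 + 1)) := by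
  have hball : {u : ι → ℝ | ∑ i, u i ^ 2 < R ^ 2} =
      R • {u : ι → ℝ | ∑ i, |u i| ^ (2 : ℝ) < 1} := by
    ext u
    simp only [Set.mem_smul_set_iff_inv_smul_mem₀ hR.ne', Set.mem_ofPred_eq, Pi.smul_apply,
      smul_eq_mul, Real.rpow_two, sq_abs, mul_pow, ← Finset.mul_sum, inv_pow]
    rw [inv_mul_lt_one₀ (by positivity)]
  have hΓ : 2 * Real.Gamma (1 / 2 + 1) = √Real.pi := by
    rw [Real.Gamma_add_one (by norm_num), Real.Gamma_one_half_eq]; ring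
  rw [hball, Measure.addHaar_smul_of_nonneg _ hR.le, volume_sum_rpow_lt_one ι one_le_two,
    Module.finrank_fintype_fun_eq_card, ENNReal.ofReal_pow hR.le, hΓ]

theorem hasFDerivAt_pi_sq (u : ι → ℝ) :
    HasFDerivAt (fun (v : ι → ℝ) i => v i ^ 2)
      (ContinuousLinearMap.pi fun i => (2 * u i) • ContinuousLinearMap.proj i :
        (ι → ℝ) →L[ℝ] ι → ℝ) u := by
  refine hasFDerivAt_pi.2 fun i => ?_
  simpa [nsmul_eq_mul] using (hasFDerivAt_apply (𝕜 := ℝ) i u).pow 2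

theorem det_pi_smul_proj [DecidableEq ι] (c : ι → ℝ) :
    (ContinuousLinearMap.pi fun i => c i • ContinuousLinearMap.proj i :
      (ι → ℝ) →L[ℝ] ι → ℝ).det = ∏ i, c i := by
  have : (ContinuousLinearMap.pi fun i => c i • ContinuousLinearMap.proj i :
      (ι → ℝ) →L[ℝ] ι → ℝ) = (Matrix.toLin' (Matrix.diagonal c)).toContinuousLinearMap := by
    ext v i; simp [Matrix.mulVec_diagonal]
  rw [this, ContinuousLinearMap.det, LinearMap.coe_toContinuousLinearMap, LinearMap.det_toLin',
    Matrix.det_diagonal]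

theorem lintegral_image_sq_eq_volume {t : Set (ι → ℝ)} (ht : MeasurableSet t)
    (htpos : t ⊆ Set.univ.pi fun _ => Set.Ioi 0) :
    ∫⁻ ζ in (fun u i => u i ^ 2) '' t, ENNReal.ofReal (∏ i, 1 / √(4 * ζ i)) = volume t := by
  classical
  have hinj : Set.InjOn (fun (u : ι → ℝ) i => u i ^ 2) t := by
    intro u hu v hv huv
    ext i
    exact (pow_left_inj₀ (htpos hu i trivial).le (htpos hv i trivial).le two_ne_zero).1
      (congrFun huv i)
  rw [lintegral_image_eq_lintegral_abs_det_fderiv_mul volume ht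
    (fun u _ => (hasFDerivAt_pi_sq u).hasFDerivWithinAt) hinj, ← setLIntegral_one]
  refine setLIntegral_congr_fun ht fun u hu => ?_
  have hpos : ∀ i, 0 < 2 * u i := fun i => by
    have : 0 < u i := htpos hu i trivial
    linarith
  have hsqrt : ∀ i, √(4 * u i ^ 2) = 2 * u i := fun i => by
    rw [show 4 * u i ^ 2 = (2 * u i) ^ 2 by ring, Real.sqrt_sq (hpos i).le]
  simp only [det_pi_smul_proj, hsqrt]
  rw [← ENNReal.ofReal_mul (abs_nonneg _), abs_of_pos (Finset.prod_pos fun i _ => hpos i),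
    ← Finset.prod_mul_distrib, Finset.prod_eq_one fun i _ => mul_one_div_cancel (hpos i).ne',
    ENNReal.ofReal_one]

theorem sqrt_two_pow_mul_sqrt_pi_pow (n : ℕ) :
    √2 ^ n * √Real.pi ^ n = 2 ^ n * (Real.pi / 2) ^ ((n : ℝ) / 2) := by
  have h : √2 * √Real.pi = 2 * √(Real.pi / 2) := by
    rw [Real.sqrt_div' _ (by norm_num : (0:ℝ) ≤ 2)]
    field_simp
    rw [Real.sq_sqrt (by norm_num)]
  rw [← mul_pow, h, mul_pow, Real.sqrt_eq_rpow, ← Real.rpow_mul_natCast (by positivity)]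
  ring_nf

theorem setLIntegral_simplex_prod_inv_sqrt :
    ∫⁻ ζ in {ζ : ι → ℝ | (∀ i, 0 ≤ ζ i) ∧ ∑ i, ζ i < 2},
        ENNReal.ofReal (∏ i, 1 / √(4 * ζ i)) =
      ENNReal.ofReal ((Real.pi / 2) ^ ((Fintype.card ι : ℝ) / 2) /
        Real.Gamma (Fintype.card ι / 2 + 1)) := by
  set n := Fintype.card ι
  set P : Set (ι → ℝ) := Set.univ.pi fun _ => Set.Ioi 0
  set B : Set (ι → ℝ) := {u | ∑ i, u i ^ 2 < √2 ^ 2}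
  have hB : MeasurableSet B := measurableSet_lt (by fun_prop) measurable_const
  have hP : MeasurableSet P := MeasurableSet.univ_pi fun _ => measurableSet_Ioi
  have himage : (fun u i => u i ^ 2) '' (B ∩ P) = ({ζ | ∑ i, ζ i < 2} ∩ P : Set (ι → ℝ)) := by
    ext ζ
    constructor
    · rintro ⟨u, ⟨hu, hpos⟩, rfl⟩
      exact ⟨by simpa [B] using hu, fun i _ => Set.mem_Ioi.2 (pow_pos (hpos i trivial) 2)⟩
    · rintro ⟨hsum, hpos⟩
      refine ⟨fun i => √(ζ i), ⟨?_, fun i _ => Real.sqrt_pos.2 (hpos i trivial)⟩, ?_⟩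
      · simpa [B, Real.sq_sqrt (hpos _ trivial).le] using hsum
      · ext i; exact Real.sq_sqrt (hpos i trivial).le
  have hae : {ζ : ι → ℝ | (∀ i, 0 ≤ ζ i) ∧ ∑ i, ζ i < 2} =ᵐ[volume]
      ({ζ | ∑ i, ζ i < 2} ∩ P : Set (ι → ℝ)) := by
    have hP_ae : P =ᵐ[volume] Set.Ici (0 : ι → ℝ) := by
      rw [volume_pi]; exact Measure.univ_pi_Ioi_ae_eq_Ici
    have : {ζ : ι → ℝ | (∀ i, 0 ≤ ζ i) ∧ ∑ i, ζ i < 2} = {ζ | ∑ i, ζ i < 2} ∩ Set.Ici 0 := by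
      ext ζ; simp [Pi.le_def, and_comm]
    rw [this]
    exact (Filter.EventuallyEq.refl _ _).inter hP_ae.symm
  have hC : (2 : ℝ≥0∞) ^ n *
        ENNReal.ofReal ((Real.pi / 2) ^ ((n : ℝ) / 2) / Real.Gamma (n / 2 + 1)) =
      ENNReal.ofReal √2 ^ n * ENNReal.ofReal (√Real.pi ^ n / Real.Gamma (n / 2 + 1)) := by
    rw [← ENNReal.ofReal_pow (by positivity), ← ENNReal.ofReal_mul (by positivity),
      ← mul_div_assoc, sqrt_two_pow_mul_sqrt_pi_pow, mul_div_assoc,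
      ENNReal.ofReal_mul (by positivity)]
    simp
  rw [setLIntegral_congr hae, ← himage,
    lintegral_image_sq_eq_volume (hB.inter hP) Set.inter_subset_right,
    ← ENNReal.mul_right_inj (pow_ne_zero n two_ne_zero) (ENNReal.pow_ne_top ENNReal.ofNat_ne_top),
    two_pow_card_mul_volume_inter_orthant hB (by simp [B, sq_abs]),
    volume_sum_sq_lt_sq (by positivity), hC]

end Pi

theorem omegaDown_le_one {a r : ℝ} (ha : a ≤ 1) (hr0 : 0 ≤ r) (hr1 : r ≤ 1) :
    omegaDown a r ≤ 1 := by
  refine max_le ?_ hr1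
  have : √(r ^ 2 / 4 + a * r) ≤ √((r / 2 + 1) ^ 2) := Real.sqrt_le_sqrt (by nlinarith)
  rw [Real.sqrt_sq (by linarith)] at this
  linarith

theorem omegaPrime_le {k : ℕ} (hk : 1 ≤ k) {a r : ℝ} (ha : a ≤ 1) (hr0 : 0 ≤ r) (hr1 : r ≤ 1) :
    omegaPrime k a r ≤ 1 / ((k : ℝ) - 1) :=
  div_le_div_of_nonneg_right (omegaDown_le_one ha hr0 hr1)
    (sub_nonneg.2 (by exact_mod_cast hk))

theorem card_subtype_ne_eq {X : Type*} [Fintype X] [DecidableEq X] (xmax : X) :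
    (Fintype.card {x : X // x ≠ xmax} : ℝ) = Fintype.card X - 1 := by
  rw [Fintype.card_subtype_compl, Fintype.card_subtype_eq,
    Nat.cast_sub (Fintype.card_pos_iff.2 ⟨xmax⟩), Nat.cast_one]

theorem mem_simplex_of_mem_quadrant {X : Type*} [Fintype X] [DecidableEq X] {xmax : X}
    {r : ℝ} (hr0 : 0 ≤ r) (hr1 : r ≤ 1) {α : X → ℝ} (hα0 : ∀ x, 0 ≤ α x)
    (hαsum : ∑ x, α x = 1) (hαmax : ∀ x, α x ≤ α xmax) {ζ : {x : X // x ≠ xmax} → ℝ}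
    (hζ : ∀ x : {x : X // x ≠ xmax},
      0 ≤ ζ x - α x.1 ∧ ζ x - α x.1 ≤ omegaPrime (Fintype.card X) (α x.1) r) :
    (∀ x, 0 ≤ ζ x) ∧ ∑ x, ζ x < 2 := by
  have hα1 : ∀ x, α x ≤ 1 := fun x =>
    hαsum ▸ Finset.single_le_sum (fun y _ => hα0 y) (Finset.mem_univ x)
  have hmax_pos : 0 < α xmax := by
    by_contra! h
    have : ∑ x, α x ≤ 0 := Finset.sum_nonpos fun x _ => (hαmax x).trans h
    linarith
  have hsum_ne : ∑ x : {x : X // x ≠ xmax}, α x = 1 - α xmax := by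
    rw [← hαsum, Fintype.sum_eq_add_sum_subtype_ne _ xmax]
    ring
  have hcard : (Fintype.card {x : X // x ≠ xmax} : ℝ) * (1 / ((Fintype.card X : ℝ) - 1)) ≤ 1 := by
    rw [card_subtype_ne_eq, mul_one_div]
    exact div_self_le_one _
  refine ⟨fun x => by linarith [hα0 x.1, (hζ x).1], ?_⟩
  calc ∑ x, ζ x ≤ ∑ x : {x : X // x ≠ xmax}, (α x + 1 / ((Fintype.card X : ℝ) - 1)) :=
        Finset.sum_le_sum fun x _ => by
          linarith [(hζ x).2, omegaPrime_le (Fintype.card_pos_iff.2 ⟨xmax⟩) (hα1 x.1) hr0 hr1]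
    _ = 1 - α xmax + Fintype.card {x : X // x ≠ xmax} * (1 / ((Fintype.card X : ℝ) - 1)) := by
        rw [Finset.sum_add_distrib, hsum_ne, Finset.sum_const, Finset.card_univ, nsmul_eq_mul]
    _ < 2 := by linarith

theorem V_weight_upper_bound_general {X : Type} [Fintype X] [DecidableEq X]
    (xmax : X) (r : ℝ) (hr0 : 0 < r) (hr1 : r ≤ 1) :
    (∫ ζ : {x : X // x ≠ xmax} → ℝ in
        {ζ | ∃ α : X → ℝ,
          (∀ x, 0 ≤ α x) ∧ (∑ x, α x = 1) ∧ (∀ x, α x ≤ α xmax) ∧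
          ∀ x : {x : X // x ≠ xmax},
            0 ≤ ζ x - α x.1 ∧ ζ x - α x.1 ≤ omegaPrime (Fintype.card X) (α x.1) r},
        ∏ x, 1 / Real.sqrt (4 * ζ x)) ≤
      (Real.pi / 2) ^ (((Fintype.card X : ℝ) - 1) / 2) /
        Real.Gamma (1 + ((Fintype.card X : ℝ) - 1) / 2) := by
  have hφ : Measurable fun ζ : {x : X // x ≠ xmax} → ℝ => ∏ x, 1 / √(4 * ζ x) := by fun_prop
  have hC : 0 ≤ (Real.pi / 2) ^ (((Fintype.card X : ℝ) - 1) / 2) /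
      Real.Gamma (1 + ((Fintype.card X : ℝ) - 1) / 2) :=
    div_nonneg (by positivity) (Real.Gamma_nonneg_of_nonneg
      (by linarith [(Fintype.card X).cast_nonneg (α := ℝ)]))
  refine integral_le_of_lintegral_ofReal_le (ae_of_all _ fun ζ => by positivity)
    hφ.aestronglyMeasurable hC ?_
  refine (lintegral_mono_set (t := {ζ | (∀ i, 0 ≤ ζ i) ∧ ∑ i, ζ i < 2}) ?_).trans_eq ?_
  · rintro ζ ⟨α, hα0, hαsum, hαmax, hquad⟩
    exact mem_simplex_of_mem_quadrant hr0.le hr1 hα0 hαsum hαmax hquad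
  · rw [setLIntegral_simplex_prod_inv_sqrt, card_subtype_ne_eq, add_comm]

/-- For `0 < r ≤ 1`, the weight of the union `V'` of all quadrants `Q'(α,r)` over probability
vectors `α` maximized at `xmax` satisfies
`∫_{V'} φ dζ' ≤ (π/2)^{(|X|-1)/2} / Γ(1 + (|X|-1)/2)`. -/
theorem V_weight_upper_bound {X : Type} [Fintype X] [DecidableEq X]
    (hX : 2 ≤ Fintype.card X)
    (xmax : X) (r : ℝ) (hr0 : 0 < r) (hr1 : r ≤ 1) :
    (∫ ζ : {x : X // x ≠ xmax} → ℝ in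
        {ζ | ∃ α : X → ℝ,
          (∀ x, 0 ≤ α x) ∧ (∑ x, α x = 1) ∧ (∀ x, α x ≤ α xmax) ∧
          ∀ x : {x : X // x ≠ xmax},
            0 ≤ ζ x - α x.1 ∧ ζ x - α x.1 ≤ omegaPrime (Fintype.card X) (α x.1) r},
        ∏ x, 1 / Real.sqrt (4 * ζ x)) ≤
      (Real.pi / 2) ^ (((Fintype.card X : ℝ) - 1) / 2) /
        Real.Gamma (1 + ((Fintype.card X : ℝ) - 1) / 2) :=
  V_weight_upper_bound_general xmax r hr0 hr1
end

section
/- Let W: X → Y be a DMC with fixed input distribution P_X (all π(x) > 0, all π(y) > 0), and let y_a, y_b ∈ Y be distinct letters with π(y_a) ≤ 2/|Y| and π(y_b) ≤ 2/|Y|. Then the merger Q of y_a and y_b satisfies ΔI = I(W,P_X) − I(Q,P_X) ≤ (4|X|/|Y|) · d(α, β), where α and β are the posterior vectors of y_a and y_b. -/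
open scoped BigOperators

/-- `η(p) = -p ln p` (equals `0` at `p = 0` since `Real.log 0 = 0`). -/
noncomputable def eta (p : ℝ) : ℝ := -p * Real.log p

/-- Output distribution `π(y) = ∑ x, π(x) W(y|x)`. -/
noncomputable def outDist {X Y : Type} [Fintype X] (pX : X → ℝ) (W : X → Y → ℝ) (y : Y) : ℝ :=
  ∑ x, pX x * W x y

/-- Posterior probability `W(x|y) = π(x) W(y|x) / π(y)`. -/
noncomputable def post {X Y : Type} [Fintype X] (pX : X → ℝ) (W : X → Y → ℝ) (x : X) (y : Y) : ℝ :=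
  pX x * W x y / outDist pX W y

/-- Mutual information `I(W, P_X) = ∑ x, η(π(x)) - ∑ x y, π(y) η(W(x|y))`. -/
noncomputable def mutInfo {X Y : Type} [Fintype X] [Fintype Y]
    (pX : X → ℝ) (W : X → Y → ℝ) : ℝ :=
  (∑ x, eta (pX x)) - ∑ x, ∑ y, outDist pX W y * eta (post pX W x y)

/-- The merger of output letters `ya` and `yb`: the new output alphabet is
`Option {y // y ≠ ya ∧ y ≠ yb}`, with `none` playing the role of the merged letter `y_ab`. -/
noncomputable def merger {X Y : Type} [DecidableEq Y] (W : X → Y → ℝ) (ya yb : Y) (x : X) :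
    Option {y : Y // y ≠ ya ∧ y ≠ yb} → ℝ
  | none => W x ya + W x yb
  | some y => W x y.1

/-! Merging `y_a` and `y_b` replaces, for each input `x`, the terms `π(y_a) η(α_x) + π(y_b) η(β_x)`
of `I(W)` by `(π(y_a) + π(y_b)) η(γ_x)`, where `γ_x` is the `π`-weighted average of `α_x` and
`β_x`. This loss equals `π(y_a) α_x log (α_x / γ_x) + π(y_b) β_x log (β_x / γ_x)`, and
`log t ≤ t - 1` bounds it both by `(π(y_a) + π(y_b)) |β_x - α_x|` and, through the variance of
the two-point law, by `(π(y_a) + π(y_b)) (β_x - α_x)² / min(α_x, β_x)`. Summing over `x` and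
using `π(y_a) + π(y_b) ≤ 4/|Y|` gives the bound. -/

open Real

/-- The contribution of one input letter to the loss of mutual information when two output
letters of probabilities `pa`, `pb` and posteriors `a`, `b` are merged. -/
noncomputable def mergeLoss (pa pb a b : ℝ) : ℝ :=
  (pa + pb) * eta ((pa * a + pb * b) / (pa + pb)) - pa * eta a - pb * eta b

section MergeLoss

variable {pa pb a b : ℝ}

lemma mergeLoss_comm : mergeLoss pa pb a b = mergeLoss pb pa b a := by
  simp only [mergeLoss, add_comm pb pa, add_comm (pb * b) (pa * a)]
  ring

lemma mergeLoss_eq_mul_log_sub_log (hs : pa + pb ≠ 0) :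
    mergeLoss pa pb a b =
      pa * a * (log a - log ((pa * a + pb * b) / (pa + pb)))
        + pb * b * (log b - log ((pa * a + pb * b) / (pa + pb))) := by
  have hm : (pa + pb) * ((pa * a + pb * b) / (pa + pb)) = pa * a + pb * b := mul_div_cancel₀ _ hs
  simp only [mergeLoss, eta]
  linear_combination (-log ((pa * a + pb * b) / (pa + pb))) * hm

lemma log_sub_log_le_div {x m : ℝ} (hx : 0 < x) (hm : 0 < m) : log x - log m ≤ (x - m) / m := by
  have h := log_le_sub_one_of_pos (div_pos hx hm)
  rwa [log_div hx.ne' hm.ne', div_sub_one hm.ne'] at h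

lemma mergeLoss_le_sub_of_le (hpa : 0 < pa) (hpb : 0 < pb) (ha : 0 ≤ a) (hab : a ≤ b) :
    mergeLoss pa pb a b ≤ (pa + pb) * (b - a) := by
  have hs : 0 < pa + pb := by linarith
  rcases (ha.trans hab).eq_or_lt with hb | hb
  · obtain rfl : a = 0 := le_antisymm (hab.trans hb.ge) ha
    subst hb
    simp [mergeLoss, eta]
  set m := (pa * a + pb * b) / (pa + pb)
  have hsm : (pa + pb) * m = pa * a + pb * b := mul_div_cancel₀ _ hs.ne'
  have hm : 0 < m := div_pos (by positivity) hs
  have ham : a ≤ m := by nlinarith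
  have hmb : m ≤ b := by nlinarith
  have hA : pa * a * (log a - log m) ≤ 0 := by
    rcases ha.eq_or_lt with rfl | ha'
    · simp
    · exact mul_nonpos_of_nonneg_of_nonpos (by positivity) (sub_nonpos.2 (log_le_log ha' ham))
  have hB : pb * b * (log b - log m) ≤ (pa + pb) * (b - m) :=
    calc pb * b * (log b - log m) ≤ pb * b * ((b - m) / m) :=
          mul_le_mul_of_nonneg_left (log_sub_log_le_div hb hm) (by positivity)
      _ ≤ (pa + pb) * m * ((b - m) / m) :=
          mul_le_mul_of_nonneg_right (by nlinarith) (div_nonneg (by linarith) hm.le)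
      _ = (pa + pb) * (b - m) := by field_simp
  rw [mergeLoss_eq_mul_log_sub_log hs.ne']
  nlinarith

lemma mergeLoss_le_abs_sub (hpa : 0 < pa) (hpb : 0 < pb) (ha : 0 ≤ a) (hb : 0 ≤ b) :
    mergeLoss pa pb a b ≤ (pa + pb) * |b - a| := by
  rcases le_total a b with hab | hba
  · rw [abs_of_nonneg (sub_nonneg.2 hab)]
    exact mergeLoss_le_sub_of_le hpa hpb ha hab
  · rw [mergeLoss_comm, abs_of_nonpos (sub_nonpos.2 hba), neg_sub, add_comm pa pb]
    exact mergeLoss_le_sub_of_le hpb hpa hb hba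

lemma mergeLoss_le_sq_div_min (hpa : 0 < pa) (hpb : 0 < pb) (ha : 0 < a) (hb : 0 < b) :
    mergeLoss pa pb a b ≤ (pa + pb) * ((b - a) ^ 2 / min a b) := by
  have hs : 0 < pa + pb := by linarith
  set m := (pa * a + pb * b) / (pa + pb) with hm_def
  have hsm : (pa + pb) * m = pa * a + pb * b := mul_div_cancel₀ _ hs.ne'
  have hmin : 0 < min a b := lt_min ha hb
  have hm_ge : min a b ≤ m := by
    rw [hm_def, le_div_iff₀ hs]
    nlinarith [min_le_left a b, min_le_right a b]
  have hm : 0 < m := hmin.trans_le hm_ge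
  have hvar : pa * a * (a - m) + pb * b * (b - m) = pa * pb * (b - a) ^ 2 / (pa + pb) := by
    field_simp
    linear_combination (-(pa * a + pb * b)) * hsm
  rw [mergeLoss_eq_mul_log_sub_log hs.ne']
  calc pa * a * (log a - log m) + pb * b * (log b - log m)
      ≤ pa * a * ((a - m) / m) + pb * b * ((b - m) / m) := by
        gcongr
        · exact log_sub_log_le_div ha hm
        · exact log_sub_log_le_div hb hm
    _ = pa * pb * (b - a) ^ 2 / ((pa + pb) * m) := by
        rw [← mul_div_assoc, ← mul_div_assoc, ← add_div, hvar, div_div]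
    _ ≤ (pa + pb) ^ 2 * (b - a) ^ 2 / ((pa + pb) * min a b) := by
        gcongr
        nlinarith
    _ = (pa + pb) * ((b - a) ^ 2 / min a b) := by
        field_simp

lemma mergeLoss_le_mul_dSc (hpa : 0 < pa) (hpb : 0 < pb) (ha : 0 ≤ a) (hb : 0 ≤ b) :
    mergeLoss pa pb a b ≤ (pa + pb) * dSc a b := by
  have h₁ := mergeLoss_le_abs_sub hpa hpb ha hb
  unfold dSc
  split_ifs with h
  · rw [mul_min_of_nonneg _ _ (by linarith)]
    exact le_min h₁ (mergeLoss_le_sq_div_min hpa hpb h.1 h.2)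
  · exact h₁

end MergeLoss

lemma dSc_nonneg (a z : ℝ) : 0 ≤ dSc a z := by
  unfold dSc
  split_ifs with h
  · exact le_min (abs_nonneg _) (div_nonneg (sq_nonneg _) (le_min h.1.le h.2.le))
  · exact abs_nonneg _

lemma dSc_le_dVec {X : Type} [Fintype X] [Nonempty X] (a b : X → ℝ) (x : X) :
    dSc (a x) (b x) ≤ dVec a b :=
  Finset.le_sup' (fun x => dSc (a x) (b x)) (Finset.mem_univ x)

lemma dVec_nonneg {X : Type} [Fintype X] [Nonempty X] (a b : X → ℝ) : 0 ≤ dVec a b :=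
  (dSc_nonneg _ _).trans (dSc_le_dVec a b (Classical.arbitrary X))

lemma Fintype.sum_eq_add_add_sum_subtype_ne_ne {Y M : Type*} [Fintype Y] [DecidableEq Y]
    [AddCommMonoid M] {ya yb : Y} (hab : ya ≠ yb) (f : Y → M) :
    ∑ y, f y = f ya + f yb + ∑ y : {y : Y // y ≠ ya ∧ y ≠ yb}, f y := by
  have hmem : ∀ y, y ∈ (Finset.univ.erase ya).erase yb ↔ y ≠ ya ∧ y ≠ yb := by
    simp [and_comm]
  rw [← Finset.add_sum_erase _ _ (Finset.mem_univ ya),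
    ← Finset.add_sum_erase _ _ (Finset.mem_erase.2 ⟨hab.symm, Finset.mem_univ yb⟩), add_assoc,
    Finset.sum_subtype _ hmem]

section Merger

variable {X Y : Type} [Fintype X] [DecidableEq Y]

lemma outDist_merger_none (pX : X → ℝ) (W : X → Y → ℝ) (ya yb : Y) :
    outDist pX (merger W ya yb) none = outDist pX W ya + outDist pX W yb := by
  simp only [outDist, merger, mul_add, Finset.sum_add_distrib]

lemma post_merger_none (pX : X → ℝ) (W : X → Y → ℝ) {ya yb : Y}
    (ha : outDist pX W ya ≠ 0) (hb : outDist pX W yb ≠ 0) (x : X) :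
    post pX (merger W ya yb) x none =
      (outDist pX W ya * post pX W x ya + outDist pX W yb * post pX W x yb)
        / (outDist pX W ya + outDist pX W yb) := by
  simp only [post, outDist_merger_none, mul_div_cancel₀ _ ha, mul_div_cancel₀ _ hb, merger,
    mul_add]

theorem mutInfo_sub_mutInfo_merger [Fintype Y] (pX : X → ℝ) (W : X → Y → ℝ) {ya yb : Y}
    (hab : ya ≠ yb) (ha : outDist pX W ya ≠ 0) (hb : outDist pX W yb ≠ 0) :
    mutInfo pX W - mutInfo pX (merger W ya yb) =
      ∑ x, mergeLoss (outDist pX W ya) (outDist pX W yb) (post pX W x ya) (post pX W x yb) := by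
  unfold mutInfo
  rw [sub_sub_sub_cancel_left, ← Finset.sum_sub_distrib]
  refine Finset.sum_congr rfl fun x _ => ?_
  have hsome : ∑ y : {y : Y // y ≠ ya ∧ y ≠ yb},
      outDist pX (merger W ya yb) (some y) * eta (post pX (merger W ya yb) x (some y)) =
      ∑ y : {y : Y // y ≠ ya ∧ y ≠ yb}, outDist pX W y * eta (post pX W x y) := rfl
  rw [Fintype.sum_option, hsome, Fintype.sum_eq_add_add_sum_subtype_ne_ne hab,
    outDist_merger_none, post_merger_none pX W ha hb, mergeLoss]
  ring

end Merger

theorem mutInfo_sub_mutInfo_merger_le {X Y : Type} [Fintype X] [Nonempty X] [Fintype Y]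
    [DecidableEq Y] (pX : X → ℝ) (W : X → Y → ℝ) (hW0 : ∀ x y, 0 ≤ W x y)
    (hpX : ∀ x, 0 ≤ pX x) {ya yb : Y} (hab : ya ≠ yb) (ha : 0 < outDist pX W ya)
    (hb : 0 < outDist pX W yb) :
    mutInfo pX W - mutInfo pX (merger W ya yb) ≤
      Fintype.card X * ((outDist pX W ya + outDist pX W yb) *
        dVec (fun x => post pX W x ya) (fun x => post pX W x yb)) := by
  have hpost : ∀ x {y}, 0 < outDist pX W y → 0 ≤ post pX W x y := fun x y hy =>
    div_nonneg (mul_nonneg (hpX x) (hW0 x y)) hy.le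
  rw [mutInfo_sub_mutInfo_merger pX W hab ha.ne' hb.ne', ← nsmul_eq_mul, ← Finset.card_univ]
  refine Finset.sum_le_card_nsmul _ _ _ fun x _ => ?_
  calc _ ≤ _ := mergeLoss_le_mul_dSc ha hb (hpost x ha) (hpost x hb)
    _ ≤ _ := by gcongr; exact dSc_le_dVec (fun x => post pX W x ya) (fun x => post pX W x yb) x

theorem deltaI_le_d_small_general {X Y : Type} [Fintype X] [Nonempty X] [Fintype Y] [DecidableEq Y]
    (pX : X → ℝ) (W : X → Y → ℝ)
    (hW0 : ∀ x y, 0 ≤ W x y)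
    (hpX : ∀ x, 0 < pX x)
    (hpY : ∀ y, 0 < outDist pX W y)
    (ya yb : Y) (hab : ya ≠ yb)
    (hya : outDist pX W ya ≤ 2 / (Fintype.card Y : ℝ))
    (hyb : outDist pX W yb ≤ 2 / (Fintype.card Y : ℝ)) :
    mutInfo pX W - mutInfo pX (merger W ya yb) ≤
      4 * (Fintype.card X : ℝ) / (Fintype.card Y : ℝ) *
        dVec (fun x => post pX W x ya) (fun x => post pX W x yb) := by
  have hsum : outDist pX W ya + outDist pX W yb ≤ 4 / (Fintype.card Y : ℝ) := by
    linarith [add_div (2 : ℝ) 2 (Fintype.card Y)]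
  calc _ ≤ _ :=
        mutInfo_sub_mutInfo_merger_le pX W hW0 (fun x => (hpX x).le) hab (hpY ya) (hpY yb)
    _ ≤ Fintype.card X * (4 / (Fintype.card Y : ℝ) *
          dVec (fun x => post pX W x ya) (fun x => post pX W x yb)) := by
        gcongr
        exact dVec_nonneg _ _
    _ = _ := by ring

/-- If `π(y_a), π(y_b) ≤ 2/|Y|`, then the merger of `ya` and `yb` satisfies
`ΔI ≤ (4|X|/|Y|) d(α, β)`. -/
theorem deltaI_le_d_small {X Y : Type} [Fintype X] [Nonempty X] [Fintype Y] [DecidableEq Y]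
    (pX : X → ℝ) (W : X → Y → ℝ)
    (hW0 : ∀ x y, 0 ≤ W x y) (hW1 : ∀ x, ∑ y, W x y = 1)
    (hpX : ∀ x, 0 < pX x) (hpXsum : ∑ x, pX x = 1)
    (hpY : ∀ y, 0 < outDist pX W y)
    (ya yb : Y) (hab : ya ≠ yb)
    (hya : outDist pX W ya ≤ 2 / (Fintype.card Y : ℝ))
    (hyb : outDist pX W yb ≤ 2 / (Fintype.card Y : ℝ)) :
    mutInfo pX W - mutInfo pX (merger W ya yb) ≤
      4 * (Fintype.card X : ℝ) / (Fintype.card Y : ℝ) *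
        dVec (fun x => post pX W x ya) (fun x => post pX W x yb) :=
  deltaI_le_d_small_general pX W hW0 hpX hpY ya yb hab hya hyb
end
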